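/- arXiv:1609.09449 — 2 statements merged into one kernel-verified Lean document; each statement's English description precedes it below -/
import Mathlib

section
/- Let J : Z → ℝ be continuous on a compact set Z ⊂ ℝ^k with unique global maximizer z*. For the point mass θ_{z'} at z' ∈ Z, the (1-ρ)-quantile of J under the mixture μ̂ = (1-λ)δ_{z'} + λμ₀ equals J(z*) only if z' = z*, provided ρ < λ ∈ (0,1) and μ₀({z : J(z) ≥ J(z*)}) = 0 while μ₀ has full support giving μ₀(J ≥ l) > 0 for every l < J(z*). -/
/-!
If `z' ≠ z*`, then `J z' < J z*`, so the atom of `μ̂` at `z'` misses the superlevel set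
`{J ≥ J z*}`, which is `μ₀`-null as well: `μ̂ {J ≥ J z*} = 0 < ρ`. By continuity from above,
`μ̂ {J ≥ l} < ρ` already for some `l < J z*`, so the quantile is at most `l`; the supremum is
over a nonempty set because `μ̂` is a probability measure and `ρ < 1`.
-/

open MeasureTheory Set
open scoped ENNReal

namespace MeasureTheory

variable {α : Type*} [MeasurableSpace α]

/-- The quantile `γ_ρ(f, μ)`; being an `sSup` of reals, it is `0` when the set is empty or
unbounded. -/
noncomputable def quantile (μ : Measure α) (f : α → ℝ) (ρ : ℝ) : ℝ :=
  sSup {l : ℝ | ρ ≤ μ.real {x | l ≤ f x}}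

theorem isProbabilityMeasure_mixture {μ ν : Measure α} [IsProbabilityMeasure μ]
    [IsProbabilityMeasure ν] {t : ℝ} (ht₀ : 0 ≤ t) (ht₁ : t ≤ 1) :
    IsProbabilityMeasure (ENNReal.ofReal (1 - t) • μ + ENNReal.ofReal t • ν) :=
  ⟨by simp [← ENNReal.ofReal_add, ht₀, ht₁]⟩

theorem exists_lt_measure_setOf_le (μ : Measure α) (f : α → ℝ) {c : ℝ≥0∞} (hc : c < μ univ) :
    ∃ l, c < μ {x | l ≤ f x} := by
  have hunion : ⋃ l : ℝ, {x | l ≤ f x} = univ := iUnion_eq_univ_iff.2 fun x => ⟨f x, le_refl (f x)⟩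
  have hanti : Antitone fun l : ℝ => {x | l ≤ f x} := fun _ _ hlm _ hx => hlm.trans hx
  rwa [← hunion, hanti.measure_iUnion, lt_iSup_iff] at hc

theorem exists_lt_measure_setOf_le_lt {μ : Measure α} [IsFiniteMeasure μ] {f : α → ℝ}
    (hf : Measurable f) {a : ℝ} {c : ℝ≥0∞} (h : μ {x | a ≤ f x} < c) :
    ∃ l < a, μ {x | l ≤ f x} < c := by
  obtain ⟨u, hu_mono, hu_lt, hu_tendsto⟩ := exists_seq_strictMono_tendsto a
  have hinter : ⋂ n, {x | u n ≤ f x} = {x | a ≤ f x} := by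
    ext x
    simp only [mem_iInter, mem_ofPred_eq]
    exact ⟨fun hx => le_of_tendsto' hu_tendsto hx, fun hx n => (hu_lt n).le.trans hx⟩
  have hanti : Antitone fun n => {x | u n ≤ f x} :=
    fun _ _ hmn _ hx => (hu_mono.monotone hmn).trans hx
  have hmeas n : NullMeasurableSet {x | u n ≤ f x} μ :=
    (measurableSet_le measurable_const hf).nullMeasurableSet
  rw [← hinter, hanti.measure_iInter hmeas ⟨0, measure_ne_top μ _⟩, iInf_lt_iff] at h
  obtain ⟨n, hn⟩ := h
  exact ⟨u n, hu_lt n, hn⟩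

theorem quantile_le {μ : Measure α} [IsFiniteMeasure μ] {f : α → ℝ} {ρ l : ℝ}
    (hne : ∃ m, ρ ≤ μ.real {x | m ≤ f x}) (hl : μ.real {x | l ≤ f x} < ρ) :
    quantile μ f ρ ≤ l :=
  csSup_le hne fun _ hm => le_of_not_gt fun hlm =>
    hl.not_ge (hm.trans (measureReal_mono fun _ hx => hlm.le.trans hx))

theorem quantile_lt {μ : Measure α} [IsFiniteMeasure μ] {f : α → ℝ} (hf : Measurable f)
    {ρ a : ℝ} (hρ : ρ < μ.real univ) (ha : μ.real {x | a ≤ f x} < ρ) :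
    quantile μ f ρ < a := by
  have hρ₀ : 0 ≤ ρ := measureReal_nonneg.trans ha.le
  obtain ⟨m, hm⟩ := exists_lt_measure_setOf_le μ f
    ((ENNReal.ofReal_lt_iff_lt_toReal hρ₀ (measure_ne_top μ _)).2 hρ)
  obtain ⟨l, hla, hl⟩ := exists_lt_measure_setOf_le_lt hf
    ((ENNReal.lt_ofReal_iff_toReal_lt (measure_ne_top μ _)).2 ha)
  have hm' : ρ ≤ μ.real {x | m ≤ f x} :=
    (ENNReal.ofReal_le_iff_le_toReal (measure_ne_top μ _)).1 hm.le
  exact (quantile_le ⟨m, hm'⟩ (ENNReal.toReal_lt_of_lt_ofReal hl)).trans_lt hla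

end MeasureTheory

theorem stmt_16_general {k : ℕ} (Z : Set (Fin k → ℝ))
    (J : (Fin k → ℝ) → ℝ) (hJ : Continuous J)
    (zstar : Fin k → ℝ)
    (hmax : ∀ z ∈ Z, z ≠ zstar → J z < J zstar)
    (z' : Fin k → ℝ) (hz' : z' ∈ Z)
    (μ₀ : Measure (Fin k → ℝ)) [IsProbabilityMeasure μ₀]
    (lam ρ : ℝ) (hlam : lam ∈ Set.Ioo (0:ℝ) 1) (hρ : ρ ∈ Set.Ioo (0:ℝ) lam)
    (hμ₀zero : μ₀ {z | J zstar ≤ J z} = 0) :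
    let μhat : Measure (Fin k → ℝ) :=
      (ENNReal.ofReal (1 - lam)) • Measure.dirac z' + (ENNReal.ofReal lam) • μ₀
    sSup {l : ℝ | ρ ≤ (μhat {z | l ≤ J z}).toReal} = J zstar → z' = zstar := by
  intro μhat hq
  by_contra hne
  have hJz' : J z' < J zstar := hmax z' hz' hne
  have : IsProbabilityMeasure μhat := isProbabilityMeasure_mixture hlam.1.le hlam.2.le
  have hnull : μhat {z | J zstar ≤ J z} = 0 := by
    simp [μhat, Measure.dirac_apply, hJz'.not_ge, hμ₀zero]
  have hlt : quantile μhat J ρ < J zstar :=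
    quantile_lt hJ.measurable (by simpa using hρ.2.trans hlam.2)
      (by simpa [Measure.real, hnull] using hρ.1)
  exact hlt.ne hq

theorem stmt_16 {k : ℕ} (Z : Set (Fin k → ℝ)) (hZ : IsCompact Z)
    (J : (Fin k → ℝ) → ℝ) (hJ : Continuous J)
    (zstar : Fin k → ℝ) (hzstar : zstar ∈ Z)
    (hmax : ∀ z ∈ Z, z ≠ zstar → J z < J zstar)
    (z' : Fin k → ℝ) (hz' : z' ∈ Z)
    (μ₀ : Measure (Fin k → ℝ)) [IsProbabilityMeasure μ₀]
    (lam ρ : ℝ) (hlam : lam ∈ Set.Ioo (0:ℝ) 1) (hρ : ρ ∈ Set.Ioo (0:ℝ) lam)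
    (hμ₀zero : μ₀ {z | J zstar ≤ J z} = 0)
    (hμ₀pos : ∀ l < J zstar, 0 < μ₀ {z | l ≤ J z}) :
    let μhat : Measure (Fin k → ℝ) :=
      (ENNReal.ofReal (1 - lam)) • Measure.dirac z' + (ENNReal.ofReal lam) • μ₀
    sSup {l : ℝ | ρ ≤ (μhat {z | l ≤ J z}).toReal} = J zstar → z' = zstar :=
  stmt_16_general Z J hJ zstar hmax z' hz' μ₀ lam ρ hlam hρ hμ₀zero
end

section
/- For the multivariate Gaussian density f_θ with mean μ and covariance Σ on ℝ^m, and a twice continuously differentiable bounded function g : ℝ^m → ℝ with bounded derivatives, the identity E[g(X)(X-μ)(X-μ)ᵀ] - E[g(X)]Σ = Σ E[∇²g(X)] Σ holds, where X ~ N(μ, Σ). -/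
/-!
Write `P = Σ⁻¹` and `φ` for the density. Since `∂ᵥ φ(x) = -(P (x - μ) ⬝ v) φ(x)`, integration by
parts gives Stein's identity `E[u(X) (P (X - μ))ₖ] = E[∂ₖ u(X)]`. Applied to `u = g · (P (x - μ))ₖ`
in direction `l` and then to `u = ∂ₗ g` in direction `k`, it yields
`E[g(X) (P (X - μ))ₖ (P (X - μ))ₗ] = E[∂ₖ ∂ₗ g(X)] + Pₖₗ E[g(X)]`.
As `X - μ = Σ P (X - μ)`, conjugating this matrix identity by `Σ` gives the theorem.
All integrands are polynomially bounded multiples of `φ`, and `φ(x) ≤ c exp(-ε ‖x - μ‖² / 2)`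
where `ε > 0` is the minimum of `v ↦ v ⬝ P v` on the unit sphere.
-/

open MeasureTheory Metric Real Matrix

variable {ι : Type*} [Fintype ι]

theorem one_add_pow_mul_exp_neg_mul_sq_le (n : ℕ) {c t : ℝ} (hc : 0 < c) (ht : 0 ≤ t) :
    (1 + t) ^ n * exp (-(c * t ^ 2)) ≤ exp (n ^ 2 / (4 * c)) := by
  calc (1 + t) ^ n * exp (-(c * t ^ 2)) ≤ exp t ^ n * exp (-(c * t ^ 2)) := by
        gcongr
        linarith [add_one_le_exp t]
    _ = exp (n * t - c * t ^ 2) := by rw [← exp_nat_mul, ← exp_add]; ring_nf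
    _ ≤ exp (n ^ 2 / (4 * c)) := by
        gcongr
        rw [le_div_iff₀ (by positivity)]
        nlinarith [sq_nonneg (2 * c * t - n)]

theorem integrable_one_add_norm_pow_mul_exp_neg_mul_sq_norm {E : Type*} [NormedAddCommGroup E]
    [NormedSpace ℝ E] [FiniteDimensional ℝ E] [MeasurableSpace E] [BorelSpace E]
    {μ : Measure E} [μ.IsAddHaarMeasure] (n : ℕ) {c : ℝ} (hc : 0 < c) :
    Integrable (fun x : E => (1 + ‖x‖) ^ n * exp (-(c * ‖x‖ ^ 2))) μ := by
  set d : ℕ := Module.finrank ℝ E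
  set N : ℕ := n + d + 1
  refine (((integrable_one_add_norm (μ := μ) (r := d + 1) (by linarith)).const_mul
    (exp (N ^ 2 / (4 * c))))).mono' (by fun_prop) (ae_of_all _ fun x => ?_)
  have hsplit : (1 + ‖x‖) ^ n = (1 + ‖x‖) ^ N * (1 + ‖x‖) ^ (-((d : ℝ) + 1)) := by
    rw [← rpow_natCast, ← rpow_natCast, ← rpow_add (by positivity)]
    push_cast [N]
    ring_nf
  rw [norm_of_nonneg (by positivity), hsplit, mul_right_comm]
  gcongr
  exact one_add_pow_mul_exp_neg_mul_sq_le N hc (norm_nonneg x)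

theorem Matrix.PosDef.exists_pos_mul_sq_norm_le {P : Matrix ι ι ℝ} (hP : P.PosDef) :
    ∃ ε > 0, ∀ v, ε * ‖v‖ ^ 2 ≤ v ⬝ᵥ P *ᵥ v := by
  rcases isEmpty_or_nonempty ι with hι | hι
  · exact ⟨1, one_pos, fun v => by simp [Subsingleton.elim v 0]⟩
  have hq : Continuous fun v : ι → ℝ => v ⬝ᵥ P *ᵥ v := by
    simp only [dotProduct, mulVec]
    fun_prop
  obtain ⟨u, hu, hmin⟩ := (isCompact_sphere (0 : ι → ℝ) 1).exists_isMinOn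
    (NormedSpace.sphere_nonempty.2 zero_le_one) hq.continuousOn
  refine ⟨u ⬝ᵥ P *ᵥ u, by simpa using hP.dotProduct_mulVec_pos (ne_of_mem_sphere hu one_ne_zero),
    fun v => ?_⟩
  rcases eq_or_ne v 0 with rfl | hv
  · simp
  have hv' : ‖v‖ ≠ 0 := norm_ne_zero_iff.2 hv
  have hunit : ‖v‖⁻¹ • v ∈ sphere (0 : ι → ℝ) 1 := by
    simp [norm_smul, hv']
  calc (u ⬝ᵥ P *ᵥ u) * ‖v‖ ^ 2 ≤ ((‖v‖⁻¹ • v) ⬝ᵥ P *ᵥ (‖v‖⁻¹ • v)) * ‖v‖ ^ 2 := by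
        gcongr
        exact hmin hunit
    _ = v ⬝ᵥ P *ᵥ v := by
        simp only [mulVec_smul, smul_dotProduct, dotProduct_smul, smul_eq_mul]
        field_simp

theorem exists_abs_mulVec_apply_le (P : Matrix ι ι ℝ) :
    ∃ A, 0 ≤ A ∧ ∀ y k, |(P *ᵥ y) k| ≤ A * ‖y‖ := by
  let L := LinearMap.toContinuousLinearMap (mulVecLin P)
  exact ⟨‖L‖, norm_nonneg _, fun y k =>
    (norm_le_pi_norm (P *ᵥ y) k).trans (by simpa [L] using L.le_opNorm y)⟩

-- For `c = ((2π)ᵐ det P⁻¹)^(-1/2)` this is the density of `N(μ, P⁻¹)`; no lemma needs that `c`.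
noncomputable def gaussianWeight (c : ℝ) (P : Matrix ι ι ℝ) (μ x : ι → ℝ) : ℝ :=
  c * exp (-((x - μ) ⬝ᵥ P *ᵥ (x - μ)) / 2)

theorem fderiv_sub_dotProduct_mulVec_sub_apply [DecidableEq ι] (P : Matrix ι ι ℝ)
    (μ x v : ι → ℝ) :
    fderiv ℝ (fun y => (y - μ) ⬝ᵥ P *ᵥ (y - μ)) x v =
      v ⬝ᵥ P *ᵥ (x - μ) + (x - μ) ⬝ᵥ P *ᵥ v := by
  let B : (ι → ℝ) →L[ℝ] (ι → ℝ) →L[ℝ] ℝ := LinearMap.toContinuousLinearMap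
    (LinearMap.toContinuousLinearMap.toLinearMap ∘ₗ toLinearMap₂' ℝ P)
  have hB : ∀ v w, B v w = v ⬝ᵥ P *ᵥ w := fun v w => by simp [B, toLinearMap₂'_apply']
  have hsub : HasFDerivAt (fun y : ι → ℝ => y - μ) (ContinuousLinearMap.id ℝ _) x :=
    (hasFDerivAt_id x).sub_const μ
  rw [show (fun y => (y - μ) ⬝ᵥ P *ᵥ (y - μ)) = fun y => B (y - μ) (y - μ) by simp only [hB],
    (B.hasFDerivAt_of_bilinear hsub hsub).fderiv]
  simp only [_root_.add_apply, ContinuousLinearMap.precompR_apply,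
    ContinuousLinearMap.precompL_apply, ContinuousLinearMap.compL_apply,
    ContinuousLinearMap.comp_id, hB]
  exact add_comm _ _

theorem hasFDerivAt_mulVec_sub_apply (P : Matrix ι ι ℝ) (μ : ι → ℝ) (k : ι) (x : ι → ℝ) :
    HasFDerivAt (fun y => (P *ᵥ (y - μ)) k)
      ((ContinuousLinearMap.proj k).comp (LinearMap.toContinuousLinearMap (mulVecLin P))) x :=
  ((ContinuousLinearMap.proj k).comp
    (LinearMap.toContinuousLinearMap (mulVecLin P))).hasFDerivAt.comp x
    ((hasFDerivAt_id x).sub_const μ)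

theorem fderiv_mul_mulVec_sub_apply_apply {g : (ι → ℝ) → ℝ} {x : ι → ℝ}
    (hg : DifferentiableAt ℝ g x) (P : Matrix ι ι ℝ) (μ : ι → ℝ) (k : ι) (v : ι → ℝ) :
    fderiv ℝ (fun y => g y * (P *ᵥ (y - μ)) k) x v =
      fderiv ℝ g x v * (P *ᵥ (x - μ)) k + g x * (P *ᵥ v) k := by
  have hs := hasFDerivAt_mulVec_sub_apply P μ k x
  rw [fderiv_fun_mul hg hs.differentiableAt, hs.fderiv]
  simp only [_root_.add_apply, _root_.smul_apply, ContinuousLinearMap.comp_apply,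
    LinearMap.coe_toContinuousLinearMap', mulVecLin_apply, ContinuousLinearMap.proj_apply,
    smul_eq_mul]
  ring

theorem ContinuousLinearMap.norm_apply_single_one_le [DecidableEq ι] {F : Type*}
    [NormedAddCommGroup F] [NormedSpace ℝ F] (f : (ι → ℝ) →L[ℝ] F) (j : ι) :
    ‖f (Pi.single j 1)‖ ≤ ‖f‖ :=
  (f.le_opNorm _).trans (by rw [Pi.norm_single, norm_one, mul_one])

theorem abs_fderiv_fderiv_apply_single_one_le [DecidableEq ι] {g : (ι → ℝ) → ℝ} {x : ι → ℝ}
    (hg : DifferentiableAt ℝ (fderiv ℝ g) x) (i j : ι) :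
    |fderiv ℝ (fun y => fderiv ℝ g y (Pi.single j 1)) x (Pi.single i 1)| ≤
      ‖fderiv ℝ (fderiv ℝ g) x‖ := by
  rw [fderiv_clm_apply hg (differentiableAt_const _), fderiv_const_apply,
    ContinuousLinearMap.comp_zero, zero_add, ContinuousLinearMap.flip_apply]
  exact ((fderiv ℝ (fderiv ℝ g) x (Pi.single i 1)).norm_apply_single_one_le j).trans
    ((fderiv ℝ (fderiv ℝ g) x).norm_apply_single_one_le i)

theorem differentiable_gaussianWeight (c : ℝ) (P : Matrix ι ι ℝ) (μ : ι → ℝ) :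
    Differentiable ℝ (gaussianWeight c P μ) := by
  unfold gaussianWeight
  simp only [dotProduct, mulVec]
  fun_prop

theorem fderiv_gaussianWeight_apply [DecidableEq ι] (c : ℝ) {P : Matrix ι ι ℝ} (hP : P.IsSymm)
    (μ x v : ι → ℝ) :
    fderiv ℝ (gaussianWeight c P μ) x v = -((P *ᵥ (x - μ)) ⬝ᵥ v * gaussianWeight c P μ x) := by
  have hq : DifferentiableAt ℝ (fun y => (y - μ) ⬝ᵥ P *ᵥ (y - μ)) x := by
    simp only [dotProduct, mulVec]
    fun_prop
  have hexp : HasDerivAt (fun t => c * exp (-t / 2))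
      (c * (exp (-((x - μ) ⬝ᵥ P *ᵥ (x - μ)) / 2) * (-1 / 2))) ((x - μ) ⬝ᵥ P *ᵥ (x - μ)) :=
    (((hasDerivAt_id _).neg.div_const 2).exp).const_mul c
  have hsymm : (x - μ) ⬝ᵥ P *ᵥ v = (P *ᵥ (x - μ)) ⬝ᵥ v := by
    rw [dotProduct_mulVec, ← vecMul_transpose, hP.eq]
  rw [show gaussianWeight c P μ = (fun t => c * exp (-t / 2)) ∘ fun y => (y - μ) ⬝ᵥ P *ᵥ (y - μ)
    from rfl, (hexp.comp_hasFDerivAt x hq.hasFDerivAt).fderiv, _root_.smul_apply,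
    fderiv_sub_dotProduct_mulVec_sub_apply, dotProduct_comm v, hsymm, smul_eq_mul,
    Function.comp_apply]
  ring

theorem integral_mul_mulVec_sub_dotProduct_mul_gaussianWeight [DecidableEq ι] (c : ℝ)
    {P : Matrix ι ι ℝ} (hP : P.IsSymm) (μ : ι → ℝ) {u : (ι → ℝ) → ℝ} (hu : Differentiable ℝ u)
    (v : ι → ℝ) (hint : Integrable fun x => u x * gaussianWeight c P μ x)
    (hint' : Integrable fun x => fderiv ℝ u x v * gaussianWeight c P μ x)
    (hint_score : Integrable fun x => u x * ((P *ᵥ (x - μ)) ⬝ᵥ v) * gaussianWeight c P μ x) :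
    ∫ x, u x * ((P *ᵥ (x - μ)) ⬝ᵥ v) * gaussianWeight c P μ x =
      ∫ x, fderiv ℝ u x v * gaussianWeight c P μ x := by
  have hderiv : (fun x => u x * fderiv ℝ (gaussianWeight c P μ) x v) =
      fun x => -(u x * ((P *ᵥ (x - μ)) ⬝ᵥ v) * gaussianWeight c P μ x) := by
    ext x
    rw [fderiv_gaussianWeight_apply c hP]
    ring
  have hibp := integral_mul_fderiv_eq_neg_fderiv_mul_of_integrable hint'
    (hderiv ▸ hint_score.neg) hint (fun x _ => hu x)
    (fun x _ => differentiable_gaussianWeight c P μ x)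
  rwa [hderiv, integral_neg, neg_inj] at hibp

section integrability

variable (c : ℝ) {P : Matrix ι ι ℝ} (μ : ι → ℝ) {F : (ι → ℝ) → ℝ}

theorem integrable_mul_gaussianWeight_of_abs_le (hP : P.PosDef) (hF : AEStronglyMeasurable F)
    {D : ℝ} (n : ℕ) (hFb : ∀ x, |F x| ≤ D * (1 + ‖x - μ‖) ^ n) :
    Integrable fun x => F x * gaussianWeight c P μ x := by
  obtain ⟨ε, hε, hq⟩ := hP.exists_pos_mul_sq_norm_le
  refine (((integrable_one_add_norm_pow_mul_exp_neg_mul_sq_norm n (half_pos hε)).comp_sub_right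
    μ).const_mul (D * |c|)).mono'
    (hF.mul (differentiable_gaussianWeight c P μ).continuous.aestronglyMeasurable)
    (ae_of_all _ fun x => ?_)
  have hD : 0 ≤ D * (1 + ‖x - μ‖) ^ n := (abs_nonneg _).trans (hFb x)
  have hexp : exp (-((x - μ) ⬝ᵥ P *ᵥ (x - μ)) / 2) ≤ exp (-(ε / 2 * ‖x - μ‖ ^ 2)) := by
    gcongr
    linarith [hq (x - μ)]
  rw [norm_mul, norm_eq_abs, norm_eq_abs, gaussianWeight, abs_mul, abs_exp]
  calc |F x| * (|c| * exp (-((x - μ) ⬝ᵥ P *ᵥ (x - μ)) / 2))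
      ≤ D * (1 + ‖x - μ‖) ^ n * (|c| * exp (-(ε / 2 * ‖x - μ‖ ^ 2))) := by gcongr; exact hFb x
    _ = _ := by ring

variable {C : ℝ}

theorem integrable_mul_gaussianWeight_of_abs_le_const (hP : P.PosDef)
    (hF : AEStronglyMeasurable F) (hFb : ∀ x, |F x| ≤ C) :
    Integrable fun x => F x * gaussianWeight c P μ x :=
  integrable_mul_gaussianWeight_of_abs_le c μ hP hF 0 (by simpa using hFb)

theorem integrable_mul_mulVec_sub_apply_mul_gaussianWeight (hP : P.PosDef)
    (hF : AEStronglyMeasurable F) (hFb : ∀ x, |F x| ≤ C) (k : ι) :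
    Integrable fun x => F x * (P *ᵥ (x - μ)) k * gaussianWeight c P μ x := by
  obtain ⟨A, hA, hs⟩ := exists_abs_mulVec_apply_le P
  refine integrable_mul_gaussianWeight_of_abs_le c μ hP (hF.mul (by fun_prop)) (D := C * A) 1
    fun x => ?_
  have hC : 0 ≤ C := (abs_nonneg _).trans (hFb x)
  calc |F x * (P *ᵥ (x - μ)) k| = |F x| * |(P *ᵥ (x - μ)) k| := abs_mul _ _
    _ ≤ C * (A * (1 + ‖x - μ‖)) :=
        mul_le_mul (hFb x) ((hs _ k).trans (by gcongr; linarith)) (abs_nonneg _) hC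
    _ = C * A * (1 + ‖x - μ‖) ^ 1 := by ring

theorem integrable_mul_mulVec_sub_apply_mul_mulVec_sub_apply_mul_gaussianWeight (hP : P.PosDef)
    (hF : AEStronglyMeasurable F) (hFb : ∀ x, |F x| ≤ C) (k l : ι) :
    Integrable fun x => F x * (P *ᵥ (x - μ)) k * (P *ᵥ (x - μ)) l * gaussianWeight c P μ x := by
  obtain ⟨A, hA, hs⟩ := exists_abs_mulVec_apply_le P
  refine integrable_mul_gaussianWeight_of_abs_le c μ hP
    ((hF.mul (by fun_prop)).mul (by fun_prop)) (D := C * A * A) 2 fun x => ?_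
  have hC : 0 ≤ C := (abs_nonneg _).trans (hFb x)
  have hs' : ∀ k, |(P *ᵥ (x - μ)) k| ≤ A * (1 + ‖x - μ‖) :=
    fun k => (hs _ k).trans (by gcongr; linarith)
  calc |F x * (P *ᵥ (x - μ)) k * (P *ᵥ (x - μ)) l|
      = |F x| * |(P *ᵥ (x - μ)) k| * |(P *ᵥ (x - μ)) l| := by rw [abs_mul, abs_mul]
    _ ≤ C * (A * (1 + ‖x - μ‖)) * (A * (1 + ‖x - μ‖)) := by
        gcongr
        exacts [hFb x, hs' k, hs' l]
    _ = C * A * A * (1 + ‖x - μ‖) ^ 2 := by ring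

end integrability

section secondOrder

variable [DecidableEq ι] (c : ℝ) {P : Matrix ι ι ℝ} (μ : ι → ℝ) {g : (ι → ℝ) → ℝ}
  {C₀ C₁ C₂ : ℝ}

theorem integrable_fderiv_apply_single_one_mul_mulVec_sub_apply_mul_gaussianWeight
    (hP : P.PosDef) (hg₁ : ∀ x, ‖fderiv ℝ g x‖ ≤ C₁) (k l : ι) :
    Integrable fun x => fderiv ℝ g x (Pi.single l 1) * (P *ᵥ (x - μ)) k * gaussianWeight c P μ x :=
  integrable_mul_mulVec_sub_apply_mul_gaussianWeight c μ hP
    (measurable_fderiv_apply_const ℝ g _).aestronglyMeasurable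
    (fun x => ((fderiv ℝ g x).norm_apply_single_one_le l).trans (hg₁ x)) k

theorem integral_mul_mulVec_sub_apply_mul_mulVec_sub_apply_mul_gaussianWeight (hP : P.PosDef)
    (hg : Differentiable ℝ g) (hg₀ : ∀ x, |g x| ≤ C₀) (hg₁ : ∀ x, ‖fderiv ℝ g x‖ ≤ C₁)
    (k l : ι) :
    ∫ x, g x * (P *ᵥ (x - μ)) k * (P *ᵥ (x - μ)) l * gaussianWeight c P μ x =
      (∫ x, fderiv ℝ g x (Pi.single l 1) * (P *ᵥ (x - μ)) k * gaussianWeight c P μ x) +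
        P k l * ∫ x, g x * gaussianWeight c P μ x := by
  have hgm : AEStronglyMeasurable g := hg.continuous.aestronglyMeasurable
  have hg_int := integrable_mul_gaussianWeight_of_abs_le_const c μ hP hgm hg₀
  have hdg_int :=
    integrable_fderiv_apply_single_one_mul_mulVec_sub_apply_mul_gaussianWeight c μ hP hg₁ k l
  have hsplit : (fun x => fderiv ℝ (fun y => g y * (P *ᵥ (y - μ)) k) x (Pi.single l 1) *
        gaussianWeight c P μ x) = fun x => fderiv ℝ g x (Pi.single l 1) * (P *ᵥ (x - μ)) k *
          gaussianWeight c P μ x + P k l * (g x * gaussianWeight c P μ x) := by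
    ext x
    rw [fderiv_mul_mulVec_sub_apply_apply (hg x), mulVec_single_one, col_apply]
    ring
  have hstein := integral_mul_mulVec_sub_dotProduct_mul_gaussianWeight c
    (isHermitian_iff_isSymm.1 hP.isHermitian) μ (u := fun y => g y * (P *ᵥ (y - μ)) k)
    (fun x => (hg x).mul (hasFDerivAt_mulVec_sub_apply P μ k x).differentiableAt) (Pi.single l 1)
    (integrable_mul_mulVec_sub_apply_mul_gaussianWeight c μ hP hgm hg₀ k)
    (by rw [hsplit]; exact hdg_int.add (hg_int.const_mul _))
    (by simpa only [dotProduct_single, mul_one] using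
      integrable_mul_mulVec_sub_apply_mul_mulVec_sub_apply_mul_gaussianWeight c μ hP hgm hg₀ k l)
  simp only [dotProduct_single, mul_one, hsplit] at hstein
  rw [hstein, integral_add hdg_int (hg_int.const_mul _), integral_const_mul]

theorem integral_fderiv_apply_single_one_mul_mulVec_sub_apply_mul_gaussianWeight
    (hP : P.PosDef) (hg' : Differentiable ℝ (fderiv ℝ g)) (hg₁ : ∀ x, ‖fderiv ℝ g x‖ ≤ C₁)
    (hg₂ : ∀ x, ‖fderiv ℝ (fderiv ℝ g) x‖ ≤ C₂) (k l : ι) :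
    ∫ x, fderiv ℝ g x (Pi.single l 1) * (P *ᵥ (x - μ)) k * gaussianWeight c P μ x =
      ∫ x, fderiv ℝ (fun y => fderiv ℝ g y (Pi.single l 1)) x (Pi.single k 1) *
        gaussianWeight c P μ x := by
  have hstein := integral_mul_mulVec_sub_dotProduct_mul_gaussianWeight c
    (isHermitian_iff_isSymm.1 hP.isHermitian) μ
    (fun x => (hg' x).clm_apply (differentiableAt_const _)) (Pi.single k 1)
    (integrable_mul_gaussianWeight_of_abs_le_const c μ hP
      (measurable_fderiv_apply_const ℝ g _).aestronglyMeasurable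
      (fun x => ((fderiv ℝ g x).norm_apply_single_one_le l).trans (hg₁ x)))
    (integrable_mul_gaussianWeight_of_abs_le_const c μ hP
      (measurable_fderiv_apply_const ℝ _ _).aestronglyMeasurable
      (fun x => (abs_fderiv_fderiv_apply_single_one_le (hg' x) k l).trans (hg₂ x)))
    (by simpa only [dotProduct_single, mul_one] using
      integrable_fderiv_apply_single_one_mul_mulVec_sub_apply_mul_gaussianWeight c μ hP hg₁ k l)
  simpa only [dotProduct_single, mul_one] using hstein

end secondOrder

theorem integral_sub_mul_sub_eq_mul_mul_transpose [DecidableEq ι] {S P : Matrix ι ι ℝ}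
    (hSP : S * P = 1) (g φ : (ι → ℝ) → ℝ) (μ : ι → ℝ)
    (hint : ∀ k l, Integrable fun x => g x * (P *ᵥ (x - μ)) k * (P *ᵥ (x - μ)) l * φ x) :
    (of fun i j => ∫ x, g x * (x i - μ i) * (x j - μ j) * φ x) =
      S * (of fun k l => ∫ x, g x * (P *ᵥ (x - μ)) k * (P *ᵥ (x - μ)) l * φ x) * Sᵀ := by
  have hsub : ∀ x i, x i - μ i = ∑ k, S i k * (P *ᵥ (x - μ)) k := fun x i => by
    have h : S *ᵥ (P *ᵥ (x - μ)) = x - μ := by rw [mulVec_mulVec, hSP, one_mulVec]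
    exact (congrFun h i).symm
  ext i j
  calc ∫ x, g x * (x i - μ i) * (x j - μ j) * φ x
      = ∫ x, ∑ k, ∑ l, S i k * S j l * (g x * (P *ᵥ (x - μ)) k * (P *ᵥ (x - μ)) l * φ x) := by
        congr 1
        ext x
        rw [hsub x i, hsub x j, mul_assoc (g x), mul_comm (g x), mul_assoc, Finset.sum_mul_sum,
          Finset.sum_mul]
        refine Finset.sum_congr rfl fun k _ => ?_
        rw [Finset.sum_mul]
        refine Finset.sum_congr rfl fun l _ => ?_
        ring
    _ = ∑ k, ∑ l, S i k * S j l * ∫ x, g x * (P *ᵥ (x - μ)) k * (P *ᵥ (x - μ)) l * φ x := by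
        rw [integral_finsetSum _ fun k _ =>
          integrable_finsetSum _ fun l _ => (hint k l).const_mul _]
        refine Finset.sum_congr rfl fun k _ => ?_
        rw [integral_finsetSum _ fun l _ => (hint k l).const_mul _]
        simp only [integral_const_mul]
    _ = _ := by
        simp only [mul_apply, transpose_apply, of_apply, Finset.sum_mul]
        rw [Finset.sum_comm]
        refine Finset.sum_congr rfl fun k _ => Finset.sum_congr rfl fun l _ => ?_
        ring

theorem stmt_17 (m : ℕ) (μv : Fin m → ℝ) (Sg : Matrix (Fin m) (Fin m) ℝ) (hSg : Sg.PosDef)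
    (g : (Fin m → ℝ) → ℝ) (hg : ContDiff ℝ 2 g)
    (C : ℝ) (hb : ∀ x, |g x| ≤ C ∧ ‖fderiv ℝ g x‖ ≤ C ∧ ‖fderiv ℝ (fderiv ℝ g) x‖ ≤ C) :
    let pdf : (Fin m → ℝ) → ℝ := fun x =>
      (Real.sqrt ((2 * Real.pi) ^ m * Sg.det))⁻¹ *
        Real.exp (-(dotProduct (x - μv) (Sg⁻¹.mulVec (x - μv))) / 2)
    let hess : (Fin m → ℝ) → Matrix (Fin m) (Fin m) ℝ := fun x =>
      Matrix.of fun i j => fderiv ℝ (fun y => fderiv ℝ g y (Pi.single j 1)) x (Pi.single i 1)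
    (Matrix.of fun i j => ∫ x, g x * (x i - μv i) * (x j - μv j) * pdf x) -
        (∫ x, g x * pdf x) • Sg =
      Sg * (Matrix.of fun i j => ∫ x, hess x i j * pdf x) * Sg := by
  intro pdf hess
  set c := (√((2 * π) ^ m * Sg.det))⁻¹
  have hP : Sg⁻¹.PosDef := hSg.inv
  have hSgT : Sgᵀ = Sg := (isHermitian_iff_isSymm.1 hSg.isHermitian).eq
  have hSP : Sg * Sg⁻¹ = 1 := mul_nonsing_inv Sg ((isUnit_iff_isUnit_det Sg).1 hSg.isUnit)
  have hgd : Differentiable ℝ g := hg.differentiable (by norm_num)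
  have hgd' : Differentiable ℝ (fderiv ℝ g) :=
    (hg.fderiv_right (m := 1) le_rfl).differentiable one_ne_zero
  have hscore : (of fun k l => ∫ x, g x * (Sg⁻¹ *ᵥ (x - μv)) k * (Sg⁻¹ *ᵥ (x - μv)) l * pdf x) =
      (of fun k l => ∫ x, hess x k l * pdf x) + (∫ x, g x * pdf x) • Sg⁻¹ := by
    ext k l
    rw [Matrix.add_apply, Matrix.smul_apply, smul_eq_mul, mul_comm]
    exact (integral_mul_mulVec_sub_apply_mul_mulVec_sub_apply_mul_gaussianWeight c μv hP hgd
      (fun x => (hb x).1) (fun x => (hb x).2.1) k l).trans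
      (by rw [integral_fderiv_apply_single_one_mul_mulVec_sub_apply_mul_gaussianWeight c μv hP hgd'
        (fun x => (hb x).2.1) (fun x => (hb x).2.2)]; rfl)
  rw [integral_sub_mul_sub_eq_mul_mul_transpose hSP g pdf μv fun k l =>
      integrable_mul_mulVec_sub_apply_mul_mulVec_sub_apply_mul_gaussianWeight c μv hP
        hgd.continuous.aestronglyMeasurable (fun x => (hb x).1) k l,
    hscore, hSgT, Matrix.mul_add, Matrix.add_mul, Matrix.mul_smul, Matrix.smul_mul, hSP,
    Matrix.one_mul, add_sub_cancel_right]
end
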